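/- For every Morse gauge M there exists a constant C ≥ 0 such that the following holds. Let X be a connected simple graph with its path metric d, let γ : ℤ → V(X) be an M-Morse bi-infinite geodesic, let Y₁ and Y₂ be connected simple graphs each of infinite diameter with path metrics d₁ and d₂, and let ι : V(Y₁) × V(Y₂) → V(X) be a map satisfying d(ι(a,b), ι(a′,b′)) = d₁(a,a′) + d₂(b,b′) for all a, a′ ∈ V(Y₁) and b, b′ ∈ V(Y₂) (an isometrically embedded product of two graphs of infinite diameter). Then the intersection of the image of γ with the image of ι has diameter at most C in X. -/

import Mathlib

/-- `β : {0,…,m} → V` is an `(A,B)`-quasigeodesic in the graph `X`: consecutive points are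
equal or adjacent, and `|i−j|/A − B ≤ d(β i, β j) ≤ A|i−j| + B` for all `i, j`. -/
def IsQuasigeodesic {V : Type*} (X : SimpleGraph V) (A B : ℝ) {m : ℕ}
    (β : Fin (m + 1) → V) : Prop :=
  (∀ i : Fin m, β i.castSucc = β i.succ ∨ X.Adj (β i.castSucc) (β i.succ)) ∧
  ∀ i j : Fin (m + 1),
    |((i : ℕ) : ℝ) - ((j : ℕ) : ℝ)| / A - B ≤ (X.dist (β i) (β j) : ℝ) ∧
    (X.dist (β i) (β j) : ℝ) ≤ A * |((i : ℕ) : ℝ) - ((j : ℕ) : ℝ)| + B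

/-- `γ : ℤ → V` is a bi-infinite geodesic in the graph `X`. -/
def IsBiInfGeodesic {V : Type*} (X : SimpleGraph V) (γ : ℤ → V) : Prop :=
  ∀ s t : ℤ, (X.dist (γ s) (γ t) : ℤ) = |s - t|

/-- A bi-infinite geodesic `γ` is `M`-Morse if every `(A,B)`-quasigeodesic with endpoints on
the image of `γ` stays in the closed `M(A,B)`-neighbourhood of the image of `γ`. -/
def IsMorse {V : Type*} (X : SimpleGraph V) (M : ℝ → ℝ → ℝ) (γ : ℤ → V) : Prop :=
  ∀ A B : ℝ, 1 ≤ A → 0 ≤ B → ∀ (m : ℕ) (β : Fin (m + 1) → V),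
    IsQuasigeodesic X A B β →
    β 0 ∈ Set.range γ → β (Fin.last m) ∈ Set.range γ →
    ∀ i : Fin (m + 1), ∃ t : ℤ, (X.dist (β i) (γ t) : ℝ) ≤ M A B

/-!
Let `x = ι (a, b)` and `y = ι (a', b')` lie on `γ` with `d₂(b, b') ≤ d₁(a, a')`, and let
`K ≥ M(5, 0)`. Leave `(a, b)` in the second factor to a point `b''` with
`d₂(b, b'') = d₂(b, b') + K + 1`, cross to `a'` in the first factor, and come back to `b'`
in the second factor. Along geodesics of the factors this detour is a `(5, 0)`-quasigeodesic
with endpoints on `γ`, so its point `(m, b'')`, with `m` halfway from `a` to `a'`, is `K`-close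
to `γ`. A point `p` that is `K`-close to a geodesic line is either almost between `x` and `y`
(`d(p, x) + d(p, y) ≤ d(x, y) + 2K`) or almost beyond one of them
(`|d(p, x) - d(p, y)| ≥ d(x, y) - 2K`); for `(m, b'')` both fail once `d₁(a, a') > 2K + 2`.
Hence `d(x, y) ≤ 2 d₁(a, a') ≤ 4K + 4`.
-/

open SimpleGraph

namespace SimpleGraph.Walk

variable {V : Type*} {G : SimpleGraph V} {u v : V}

theorem dist_getVert_le (w : G.Walk u v) {s t : ℕ} (hst : s ≤ t) :
    G.dist (w.getVert s) (w.getVert t) ≤ t - s := by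
  have h := dist_le (((w.drop s).take (t - s)).copy rfl
    (by rw [drop_getVert, Nat.add_sub_cancel' hst]))
  rw [length_copy, take_length] at h
  exact h.trans inf_le_left

theorem getVert_min_length (w : G.Walk u v) (n : ℕ) :
    w.getVert (min n w.length) = w.getVert n := by
  rcases le_total n w.length with h | h
  · rw [min_eq_left h]
  · rw [min_eq_right h, getVert_length, getVert_of_length_le w h]

theorem dist_getVert_of_length_eq_dist (hG : G.Connected) {w : G.Walk u v}
    (hw : w.length = G.dist u v) {s t : ℕ} (hst : s ≤ t) :
    G.dist (w.getVert s) (w.getVert t) = min t w.length - min s w.length := by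
  rw [← w.getVert_min_length s, ← w.getVert_min_length t]
  set s' := min s w.length
  set t' := min t w.length
  have hst' : s' ≤ t' := min_le_min_right _ hst
  have hu : G.dist u (w.getVert s') ≤ s' := by
    simpa using w.dist_getVert_le (Nat.zero_le s')
  have hv : G.dist (w.getVert t') v ≤ w.length - t' := by
    simpa using w.dist_getVert_le (min_le_right t w.length)
  have h₁ := hG.dist_triangle (u := u) (v := w.getVert s') (w := w.getVert t')
  have h₂ := hG.dist_triangle (u := u) (v := w.getVert t') (w := v)
  have := w.dist_getVert_le hst'
  omega

end SimpleGraph.Walk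

theorem SimpleGraph.Connected.exists_dist_eq {V : Type*} {G : SimpleGraph V}
    (hG : G.Connected) (hfar : ∀ n : ℕ, ∃ a a' : V, n ≤ G.dist a a') (b : V) (n : ℕ) :
    ∃ c, G.dist b c = n := by
  obtain ⟨a, a', ha⟩ := hfar (2 * n)
  obtain ⟨c, hc⟩ : ∃ c, n ≤ G.dist b c := by
    have := hG.dist_triangle (u := a) (v := b) (w := a')
    have : G.dist a b = G.dist b a := dist_comm
    by_cases h : n ≤ G.dist b a
    · exact ⟨a, h⟩
    · exact ⟨a', by omega⟩
  obtain ⟨w, hw⟩ := hG.exists_walk_length_eq_dist b c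
  refine ⟨w.getVert n, ?_⟩
  simpa [hw, hc] using Walk.dist_getVert_of_length_eq_dist hG hw (Nat.zero_le n)

theorem isQuasigeodesic_of_dist_bounds {V : Type*} {X : SimpleGraph V} (hX : X.Connected)
    {L A : ℕ} (p : ℕ → V)
    (h : ∀ i j, i ≤ j → j ≤ L → X.dist (p i) (p j) ≤ j - i ∧ j - i ≤ A * X.dist (p i) (p j)) :
    IsQuasigeodesic X A 0 (fun i : Fin (L + 1) ↦ p i) := by
  have hreal : ∀ i j : Fin (L + 1), (i : ℕ) ≤ j →
      |((i : ℕ) : ℝ) - ((j : ℕ) : ℝ)| / A - 0 ≤ (X.dist (p i) (p j) : ℝ) ∧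
      (X.dist (p i) (p j) : ℝ) ≤ A * |((i : ℕ) : ℝ) - ((j : ℕ) : ℝ)| + 0 := by
    intro i j hij
    obtain ⟨hup, hlow⟩ := h i j hij (Nat.lt_succ_iff.mp j.isLt)
    rw [abs_sub_comm, abs_of_nonneg (sub_nonneg.mpr (Nat.cast_le.mpr hij)), ← Nat.cast_sub hij,
      sub_zero, add_zero]
    constructor
    · refine div_le_of_le_mul₀ (Nat.cast_nonneg _) (Nat.cast_nonneg _) ?_
      rw [mul_comm]
      exact_mod_cast hlow
    · have hA : X.dist (p i) (p j) ≤ A * (j - i) := by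
        rcases Nat.eq_zero_or_pos A with rfl | hA
        · omega
        · exact hup.trans (Nat.le_mul_of_pos_left _ hA)
      exact_mod_cast hA
  refine ⟨fun i ↦ ?_, fun i j ↦ ?_⟩
  · have h₁ := (h i (i + 1) (Nat.le_succ _) i.isLt).1
    simp only [Fin.val_castSucc, Fin.val_succ]
    have hle : X.dist (p i) (p (i + 1)) ≤ 1 := by omega
    rcases Nat.le_one_iff_eq_zero_or_eq_one.mp hle with h₀ | h₁
    · exact .inl (hX.dist_eq_zero_iff.mp h₀)
    · exact .inr (SimpleGraph.dist_eq_one_iff_adj.mp h₁)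
  · rcases le_total (i : ℕ) j with hij | hji
    · exact hreal i j hij
    · rw [SimpleGraph.dist_comm, abs_sub_comm]
      exact hreal j i hji

section Detour

variable {V₁ V₂ : Type*} {Y₁ : SimpleGraph V₁} {Y₂ : SimpleGraph V₂} {a a' : V₁} {b b'' b' : V₂}

/-- The path running along `{a} × w₁`, then `w₂ × {b''}`, then `{a'} × w₃`, and then staying
at `(a', b')`. -/
def detour (w₁ : Y₂.Walk b b'') (w₂ : Y₁.Walk a a') (w₃ : Y₂.Walk b'' b') (n : ℕ) : V₁ × V₂ :=
  (w₂.getVert (n - w₁.length),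
    if n ≤ w₁.length + w₂.length then w₁.getVert n
    else w₃.getVert (n - (w₁.length + w₂.length)))

variable (w₁ : Y₂.Walk b b'') (w₂ : Y₁.Walk a a') (w₃ : Y₂.Walk b'' b')

theorem detour_zero : detour w₁ w₂ w₃ 0 = (a, b) := by
  simp [detour]

theorem detour_length :
    detour w₁ w₂ w₃ (w₁.length + w₂.length + w₃.length) = (a', b') := by
  have hfst : w₁.length + w₂.length + w₃.length - w₁.length = w₂.length + w₃.length := by omega
  rw [detour, hfst, w₂.getVert_of_length_le (Nat.le_add_right _ _)]
  split_ifs with h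
  · obtain rfl := w₃.eq_of_length_eq_zero (by omega)
    rw [w₁.getVert_of_length_le (by omega)]
  · rw [Nat.add_sub_cancel_left, Walk.getVert_length]

theorem detour_length_add {r : ℕ} (hr : r ≤ w₂.length) :
    detour w₁ w₂ w₃ (w₁.length + r) = (w₂.getVert r, b'') := by
  simp [detour, hr, w₁.getVert_of_length_le (Nat.le_add_right _ r)]

theorem detour_dist_bounds (hY₁ : Y₁.Connected) (hY₂ : Y₂.Connected)
    (hw₁ : w₁.length = Y₂.dist b b'') (hw₂ : w₂.length = Y₁.dist a a')
    (hw₃ : w₃.length = Y₂.dist b'' b') (hR : w₁.length ≤ 2 * w₂.length)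
    {i j : ℕ} (hij : i ≤ j) (hjL : j ≤ w₁.length + w₂.length + w₃.length) :
    let d := Y₁.dist (detour w₁ w₂ w₃ i).1 (detour w₁ w₂ w₃ j).1 +
      Y₂.dist (detour w₁ w₂ w₃ i).2 (detour w₁ w₂ w₃ j).2
    d ≤ j - i ∧ j - i ≤ 5 * d := by
  intro d
  have hfst : Y₁.dist (detour w₁ w₂ w₃ i).1 (detour w₁ w₂ w₃ j).1 =
      min (j - w₁.length) w₂.length - min (i - w₁.length) w₂.length :=
    Walk.dist_getVert_of_length_eq_dist hY₁ hw₂ (Nat.sub_le_sub_right hij _)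
  simp only [d, hfst]
  simp only [detour]
  rcases le_or_gt j (w₁.length + w₂.length) with hj | hj
  · rw [if_pos (hij.trans hj), if_pos hj, Walk.dist_getVert_of_length_eq_dist hY₂ hw₁ hij]
    omega
  rcases le_or_gt i (w₁.length + w₂.length) with hi | hi
  · rw [if_pos hi, if_neg hj.not_ge]
    set k := j - (w₁.length + w₂.length)
    have hout : Y₂.dist (w₁.getVert i) b'' = w₁.length - min i w₁.length := by
      have h := Walk.dist_getVert_of_length_eq_dist hY₂ hw₁ (min_le_right i w₁.length)
      rw [Walk.getVert_min_length] at h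
      simpa using h
    have hback : Y₂.dist b'' (w₃.getVert k) = min k w₃.length := by
      simpa using Walk.dist_getVert_of_length_eq_dist hY₂ hw₃ (Nat.zero_le k)
    have t₁ := hY₂.dist_triangle (u := w₁.getVert i) (v := b'') (w := w₃.getVert k)
    have t₂ := hY₂.dist_triangle (u := b'') (v := w₁.getVert i) (w := w₃.getVert k)
    have t₃ := hY₂.dist_triangle (u := w₁.getVert i) (v := w₃.getVert k) (w := b'')
    have c₁ : Y₂.dist b'' (w₁.getVert i) = Y₂.dist (w₁.getVert i) b'' := dist_comm
    have c₂ : Y₂.dist (w₃.getVert k) b'' = Y₂.dist b'' (w₃.getVert k) := dist_comm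
    omega
  · rw [if_neg hi.not_ge, if_neg hj.not_ge,
      Walk.dist_getVert_of_length_eq_dist hY₂ hw₃ (Nat.sub_le_sub_right hij _)]
    omega

end Detour

section Geodesic

variable {V : Type*} {X : SimpleGraph V} {γ : ℤ → V}

theorem IsBiInfGeodesic.dist_eq_add_or (hγ : IsBiInfGeodesic X γ) (s₀ s₁ t : ℤ) :
    X.dist (γ s₀) (γ s₁) = X.dist (γ t) (γ s₀) + X.dist (γ t) (γ s₁) ∨
    X.dist (γ t) (γ s₀) = X.dist (γ t) (γ s₁) + X.dist (γ s₀) (γ s₁) ∨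
    X.dist (γ t) (γ s₁) = X.dist (γ t) (γ s₀) + X.dist (γ s₀) (γ s₁) := by
  have h₀ := hγ t s₀
  have h₁ := hγ t s₁
  have h₂ := hγ s₀ s₁
  simp only [abs_eq_max_neg] at h₀ h₁ h₂
  omega

theorem IsBiInfGeodesic.between_or_beyond (hX : X.Connected) (hγ : IsBiInfGeodesic X γ)
    (p : V) (s₀ s₁ t : ℤ) :
    X.dist p (γ s₀) + X.dist p (γ s₁) ≤ X.dist (γ s₀) (γ s₁) + 2 * X.dist p (γ t) ∨
    X.dist (γ s₀) (γ s₁) + X.dist p (γ s₁) ≤ X.dist p (γ s₀) + 2 * X.dist p (γ t) ∨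
    X.dist (γ s₀) (γ s₁) + X.dist p (γ s₀) ≤ X.dist p (γ s₁) + 2 * X.dist p (γ t) := by
  have hx₁ := hX.dist_triangle (u := p) (v := γ t) (w := γ s₀)
  have hx₂ := hX.dist_triangle (u := γ t) (v := p) (w := γ s₀)
  have hy₁ := hX.dist_triangle (u := p) (v := γ t) (w := γ s₁)
  have hy₂ := hX.dist_triangle (u := γ t) (v := p) (w := γ s₁)
  have hc : X.dist (γ t) p = X.dist p (γ t) := dist_comm
  have := hγ.dist_eq_add_or s₀ s₁ t
  omega

end Geodesic

theorem IsMorse.dist_fst_le_of_dist_snd_le {V V₁ V₂ : Type*} {X : SimpleGraph V} {γ : ℤ → V}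
    {M : ℝ → ℝ → ℝ} (hM : IsMorse X M γ) {K : ℕ} (hK : M 5 0 ≤ K) (hX : X.Connected)
    (hγ : IsBiInfGeodesic X γ) {Y₁ : SimpleGraph V₁} {Y₂ : SimpleGraph V₂}
    (hY₁ : Y₁.Connected) (hY₂ : Y₂.Connected) (hfar₂ : ∀ n : ℕ, ∃ b b' : V₂, n ≤ Y₂.dist b b')
    {ι : V₁ × V₂ → V}
    (hι : ∀ p q : V₁ × V₂, X.dist (ι p) (ι q) = Y₁.dist p.1 q.1 + Y₂.dist p.2 q.2)
    {s₀ s₁ : ℤ} {a a' : V₁} {b b' : V₂} (hx : γ s₀ = ι (a, b)) (hy : γ s₁ = ι (a', b'))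
    (hle : Y₂.dist b b' ≤ Y₁.dist a a') :
    Y₁.dist a a' ≤ 2 * K + 2 := by
  by_contra! hbig
  obtain ⟨b'', hb''⟩ := hY₂.exists_dist_eq hfar₂ b (Y₂.dist b b' + K + 1)
  obtain ⟨w₁, hw₁⟩ := hY₂.exists_walk_length_eq_dist b b''
  obtain ⟨w₂, hw₂⟩ := hY₁.exists_walk_length_eq_dist a a'
  obtain ⟨w₃, hw₃⟩ := hY₂.exists_walk_length_eq_dist b'' b'
  set L := w₁.length + w₂.length + w₃.length
  have hβ : IsQuasigeodesic X 5 0 (fun n : Fin (L + 1) ↦ ι (detour w₁ w₂ w₃ n)) := by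
    have := isQuasigeodesic_of_dist_bounds (A := 5) hX (fun n ↦ ι (detour w₁ w₂ w₃ n))
      fun i j hij hjL ↦ by
        rw [hι]
        exact detour_dist_bounds w₁ w₂ w₃ hY₁ hY₂ hw₁ hw₂ hw₃ (by omega) hij hjL
    exact_mod_cast this
  set r := w₂.length / 2
  have hr : r ≤ w₂.length := Nat.div_le_self _ 2
  obtain ⟨t, ht⟩ := hM 5 0 (by norm_num) le_rfl L _ hβ ⟨s₀, by simp [detour_zero, hx]⟩
    ⟨s₁, by simp [L, detour_length, hy]⟩ ⟨w₁.length + r, by omega⟩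
  have hpt : X.dist (ι (w₂.getVert r, b'')) (γ t) ≤ K := by
    rw [← detour_length_add w₁ w₂ w₃ hr]
    exact_mod_cast ht.trans hK
  have hpx : X.dist (ι (w₂.getVert r, b'')) (γ s₀) = r + w₁.length := by
    rw [hx, hι, SimpleGraph.dist_comm, hw₁, SimpleGraph.dist_comm (u := b'')]
    simpa [min_eq_left hr] using Walk.dist_getVert_of_length_eq_dist hY₁ hw₂ (Nat.zero_le r)
  have hpy : X.dist (ι (w₂.getVert r, b'')) (γ s₁) = (w₂.length - r) + w₃.length := by
    rw [hy, hι, hw₃]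
    simpa [min_eq_left hr] using Walk.dist_getVert_of_length_eq_dist hY₁ hw₂ hr
  have hxy : X.dist (γ s₀) (γ s₁) = w₂.length + Y₂.dist b b' := by
    rw [hx, hy, hι, hw₂]
  have hS₁ := hY₂.dist_triangle (u := b) (v := b') (w := b'')
  have hS₂ := hY₂.dist_triangle (u := b'') (v := b) (w := b')
  have hc₁ : Y₂.dist b' b'' = Y₂.dist b'' b' := dist_comm
  have hc₂ : Y₂.dist b'' b = Y₂.dist b b'' := dist_comm
  have := hγ.between_or_beyond hX (ι (w₂.getVert r, b'')) s₀ s₁ t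
  omega

/-- For every Morse gauge `M` there is a constant `C ≥ 0` such that any `M`-Morse bi-infinite
geodesic meets any isometrically embedded product of two graphs of infinite diameter in a
set of diameter at most `C`. -/
theorem morse_inter_product (M : ℝ → ℝ → ℝ) :
    ∃ C : ℝ, 0 ≤ C ∧
      ∀ (V : Type) (X : SimpleGraph V), X.Connected →
      ∀ γ : ℤ → V, IsBiInfGeodesic X γ → IsMorse X M γ →
      ∀ (V₁ V₂ : Type) (Y₁ : SimpleGraph V₁) (Y₂ : SimpleGraph V₂),
        Y₁.Connected → Y₂.Connected →
        (∀ n : ℕ, ∃ a a' : V₁, n ≤ Y₁.dist a a') →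
        (∀ n : ℕ, ∃ b b' : V₂, n ≤ Y₂.dist b b') →
      ∀ ι : V₁ × V₂ → V,
        (∀ p q : V₁ × V₂, X.dist (ι p) (ι q) = Y₁.dist p.1 q.1 + Y₂.dist p.2 q.2) →
      ∀ x ∈ Set.range γ ∩ Set.range ι, ∀ y ∈ Set.range γ ∩ Set.range ι,
        (X.dist x y : ℝ) ≤ C := by
  set K := ⌈M 5 0⌉₊
  refine ⟨4 * K + 4, by positivity, ?_⟩
  rintro V X hX γ hγ hM V₁ V₂ Y₁ Y₂ hY₁ hY₂ hfar₁ hfar₂ ι hι _ ⟨⟨s₀, hx⟩, ⟨a, b⟩, rfl⟩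
    _ ⟨⟨s₁, hy⟩, ⟨a', b'⟩, rfl⟩
  have hK : M 5 0 ≤ K := Nat.le_ceil _
  have hι' : ∀ p q : V₂ × V₁,
      X.dist (ι p.swap) (ι q.swap) = Y₂.dist p.1 q.1 + Y₁.dist p.2 q.2 := fun p q ↦ by
    rw [hι, add_comm, Prod.fst_swap, Prod.snd_swap, Prod.fst_swap, Prod.snd_swap]
  have hxy : X.dist (ι (a, b)) (ι (a', b')) ≤ 4 * K + 4 := by
    simp only [hι]
    rcases le_total (Y₂.dist b b') (Y₁.dist a a') with h | h
    · have := hM.dist_fst_le_of_dist_snd_le hK hX hγ hY₁ hY₂ hfar₂ hι hx hy h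
      omega
    · have := hM.dist_fst_le_of_dist_snd_le hK hX hγ hY₂ hY₁ hfar₁ (ι := ι ∘ Prod.swap) hι' hx hy h
      omega
  exact_mod_cast hxy
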